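/- Let p be an odd prime, n ≥ 1 a natural number, and 0 ≤ r ≤ n. Let Sp(n, ℤ) = { g ∈ GL(2n, ℤ) : gᵀ · w_n · g = w_n } where w_n is the 2n×2n block matrix [[0, −1_n],[1_n, 0]]; write g in n×n blocks as g = [[A_g, B_g],[C_g, D_g]]. Let P₀ = { g ∈ Sp(n, ℤ) : C_g = 0 } and Γ₀(p) = { g ∈ Sp(n, ℤ) : C_g ≡ 0 mod p }. Let w_{n,r} ∈ Sp(n, ℤ) be the element with blocks A = diag(0_r, 1_{n−r}), B = diag(−1_r, 0_{n−r}), C = diag(1_r, 0_{n−r}), D = diag(0_r, 1_{n−r}). Let ψ : ℤ → ℤ be the Legendre symbol mod p (ψ(x) = 0 if p ∣ x, ψ(x) = 1 if x is a nonzero square mod p, ψ(x) = −1 otherwise). If η · w_{n,r} · κ = η′ · w_{n,r} · κ′ with η, η′ ∈ P₀ and κ, κ′ ∈ Γ₀(p), then ψ(det D_η) · ψ(det D_κ) = ψ(det D_{η′}) · ψ(det D_{κ′}), and this common value is ±1. (Hence the function ψ*(γ) = ψ(det D_η)·ψ(det D_κ) for γ = η w_{n,r} κ is well-defined on the double coset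 P₀ · w_{n,r} · Γ₀(p).) -/
import Mathlib

open Matrix

/-- The standard symplectic form `w_n = [[0, -1],[1, 0]]` as an integral `2n × 2n` matrix. -/
def wSymp (n : ℕ) : Matrix (Fin n ⊕ Fin n) (Fin n ⊕ Fin n) ℤ :=
  Matrix.fromBlocks 0 (-1) 1 0

/-- The cusp representative `w_{n,r}` with blocks
`A = diag(0_r, 1_{n-r})`, `B = diag(-1_r, 0)`, `C = diag(1_r, 0)`, `D = diag(0_r, 1_{n-r})`. -/
def wCusp (n r : ℕ) : Matrix (Fin n ⊕ Fin n) (Fin n ⊕ Fin n) ℤ :=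
  Matrix.fromBlocks
    (Matrix.diagonal fun i : Fin n => if (i : ℕ) < r then 0 else 1)
    (Matrix.diagonal fun i : Fin n => if (i : ℕ) < r then -1 else 0)
    (Matrix.diagonal fun i : Fin n => if (i : ℕ) < r then 1 else 0)
    (Matrix.diagonal fun i : Fin n => if (i : ℕ) < r then 0 else 1)

namespace Stmt16Aux

section RingIds
variable {A : Type*} [Ring A] (E F M X : A)

lemma ring_id1 (hFE : F*E = 0) (hFF : F*F = F) (h1 : E + F = 1) :
    (1 + E*M*F) * (E*M*E + F) = E*M + F := by
  have h0 : E*M*F*(E*M*E) = 0 := by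
    rw [mul_assoc E M E, ← mul_assoc (E*M*F) E (M*E), mul_assoc (E*M) F E, hFE, mul_zero,
      zero_mul]
  have h2 : E*M*E + E*M*F = E*M := by
    rw [← mul_add (E*M) E F, h1, mul_one]
  rw [add_mul, one_mul, mul_add, h0, zero_add, mul_assoc (E*M) F F, hFF, add_right_comm, h2]

lemma ring_id2 (hEF : E*F = 0) (hEE : E*E = E) (hFF : F*F = F) (h1 : E + F = 1) :
    (E*M*E + F) * (1 + F*M*E) = M*E + F := by
  have h0 : E*M*E*(F*M*E) = 0 := by
    rw [mul_assoc F M E, ← mul_assoc (E*M*E) F (M*E), mul_assoc (E*M) E F, hEF, mul_zero,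
      zero_mul]
  have h2 : E*M*E + F*M*E = M*E := by
    rw [mul_assoc E M E, mul_assoc F M E, ← add_mul E F (M*E), h1, one_mul]
  rw [mul_add, mul_one, add_mul, h0, zero_add, mul_assoc F M E, ← mul_assoc F F (M*E), hFF,
    ← mul_assoc F M E, add_assoc, add_comm F (F*M*E), ← add_assoc, h2]

lemma ring_id3 (hEF : E*F = 0) (hFE : F*E = 0) (hEE : E*E = E) (hFF : F*F = F)
    (h1 : E + F = 1) (hX : F*X*E = 0) :
    (E + F*X*F) * (E*X + F) = X := by
  have t1 : E*(E*X) = E*X := by rw [← mul_assoc, hEE]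
  have t2 : F*X*F*(E*X) = 0 := by
    rw [← mul_assoc (F*X*F) E X, mul_assoc (F*X) F E, hFE, mul_zero, zero_mul]
  have t3 : F*X*F*F = F*X*F := by rw [mul_assoc (F*X) F F, hFF]
  have t4 : E*X + F*X*F = X := by
    calc E*X + F*X*F = E*X*E + E*X*F + (F*X*E + F*X*F) := by
          rw [hX, zero_add, ← mul_add (E*X) E F, h1, mul_one]
    _ = (E*X + F*X)*(E+F) := by rw [add_mul (E*X) (F*X) (E+F), mul_add (E*X) E F, mul_add (F*X) E F]
    _ = (E+F)*X*(E+F) := by rw [add_mul E F X]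
    _ = X := by rw [h1, one_mul, mul_one]
  rw [add_mul, mul_add, mul_add, t1, hEF, t2, t3, add_zero, zero_add, t4]

end RingIds


section Assemble
variable (p : ℕ) [Fact p.Prime]

lemma assemble (a a' b b' x x' y y' s t c : ZMod p)
    (hdets : s = x' * a) (hdett : t = b' * y)
    (hxa : x * a = 1) (hx'a' : x' * a' = 1) (hyb : y * b = 1) (hy'b' : y' * b' = 1)
    (hkey : s * t = c ^ 2) :
    (quadraticChar (ZMod p) a * quadraticChar (ZMod p) b
      = quadraticChar (ZMod p) a' * quadraticChar (ZMod p) b') ∧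
    (quadraticChar (ZMod p) a * quadraticChar (ZMod p) b = 1 ∨
      quadraticChar (ZMod p) a * quadraticChar (ZMod p) b = -1) := by
  have ha0 : a ≠ 0 := fun h => by rw [h, mul_zero] at hxa; exact zero_ne_one hxa
  have ha'0 : a' ≠ 0 := fun h => by rw [h, mul_zero] at hx'a'; exact zero_ne_one hx'a'
  have hb0 : b ≠ 0 := fun h => by rw [h, mul_zero] at hyb; exact zero_ne_one hyb
  have hb'0 : b' ≠ 0 := fun h => by rw [h, mul_zero] at hy'b'; exact zero_ne_one hy'b'
  have hx'0 : x' ≠ 0 := fun h => by rw [h, zero_mul] at hx'a'; exact zero_ne_one hx'a'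
  have hy0 : y ≠ 0 := fun h => by rw [h, zero_mul] at hyb; exact zero_ne_one hyb
  have hs0 : s ≠ 0 := hdets ▸ mul_ne_zero hx'0 ha0
  have ht0 : t ≠ 0 := hdett ▸ mul_ne_zero hb'0 hy0
  have hc0 : c ≠ 0 := by
    intro h
    rw [h] at hkey
    simp only [ne_eq, zero_pow, OfNat.ofNat_ne_zero, not_false_eq_true] at hkey
    exact mul_ne_zero hs0 ht0 hkey
  have hst : quadraticChar (ZMod p) s * quadraticChar (ZMod p) t = 1 := by
    rw [← _root_.map_mul, hkey]
    exact quadraticChar_sq_one' hc0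
  have hts : quadraticChar (ZMod p) t = quadraticChar (ZMod p) s := by
    rcases quadraticChar_dichotomy hs0 with h | h
    · rw [h, one_mul] at hst; rw [h, hst]
    · rw [h] at hst ⊢; linarith
  have h1 : s * a' = a := by
    rw [hdets]
    calc x' * a * a' = x' * a' * a := by ring
    _ = a := by rw [hx'a', one_mul]
  have h2 : t * b = b' := by rw [hdett, mul_assoc, hyb, mul_one]
  constructor
  · calc quadraticChar (ZMod p) a * quadraticChar (ZMod p) b
        = quadraticChar (ZMod p) (s * a') * quadraticChar (ZMod p) b := by rw [h1]
    _ = quadraticChar (ZMod p) s * quadraticChar (ZMod p) a' * quadraticChar (ZMod p) b := by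
        rw [_root_.map_mul]
    _ = quadraticChar (ZMod p) t * quadraticChar (ZMod p) a' * quadraticChar (ZMod p) b := by
        rw [hts]
    _ = quadraticChar (ZMod p) a' * (quadraticChar (ZMod p) t * quadraticChar (ZMod p) b) := by
        ring
    _ = quadraticChar (ZMod p) a' * quadraticChar (ZMod p) (t * b) := by rw [_root_.map_mul]
    _ = quadraticChar (ZMod p) a' * quadraticChar (ZMod p) b' := by rw [h2]
  · rcases quadraticChar_dichotomy ha0 with h | h <;>
      rcases quadraticChar_dichotomy hb0 with h' | h' <;> rw [h, h'] <;> norm_num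

end Assemble

end Stmt16Aux

namespace Stmt16Aux

section MatrixIds
variable (R : Type*) [CommRing R] (n r : ℕ)

def Em : Matrix (Fin n) (Fin n) R := Matrix.diagonal fun i => if (i:ℕ) < r then 1 else 0
def Fm : Matrix (Fin n) (Fin n) R := Matrix.diagonal fun i => if (i:ℕ) < r then 0 else 1

lemma Em_mul_Em : Em R n r * Em R n r = Em R n r := by
  ext i j
  simp only [Em, diagonal_mul_diagonal, diagonal_apply]
  split_ifs <;> ring

lemma Fm_mul_Fm : Fm R n r * Fm R n r = Fm R n r := by
  ext i j
  simp only [Fm, diagonal_mul_diagonal, diagonal_apply]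
  split_ifs <;> ring

lemma Em_mul_Fm : Em R n r * Fm R n r = 0 := by
  ext i j
  simp only [Em, Fm, diagonal_mul_diagonal, diagonal_apply, Matrix.zero_apply]
  split_ifs <;> ring

lemma Fm_mul_Em : Fm R n r * Em R n r = 0 := by
  ext i j
  simp only [Em, Fm, diagonal_mul_diagonal, diagonal_apply, Matrix.zero_apply]
  split_ifs <;> ring

lemma Em_add_Fm : Em R n r + Fm R n r = 1 := by
  ext i j
  simp only [Em, Fm, Matrix.add_apply, diagonal_apply, Matrix.one_apply]
  split_ifs <;> ring

lemma Em_transpose : (Em R n r)ᵀ = Em R n r := diagonal_transpose _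
lemma Fm_transpose : (Fm R n r)ᵀ = Fm R n r := diagonal_transpose _

lemma det_one_add_EMF (M : Matrix (Fin n) (Fin n) R) :
    (1 + Em R n r * M * Fm R n r).det = 1 := by
  have ht : BlockTriangular (1 + Em R n r * M * Fm R n r) id := by
    intro i j hij
    have hji : (j:ℕ) < (i:ℕ) := hij
    have hne : i ≠ j := fun h => by subst h; exact lt_irrefl _ hji
    rw [Matrix.add_apply, Matrix.one_apply_ne hne, zero_add]
    simp only [Em, Fm, Matrix.mul_diagonal, Matrix.diagonal_mul]
    split_ifs
    all_goals try ring
    all_goals (rename_i ha hb; exact absurd (hji.trans ha) hb)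
  rw [Matrix.det_of_upperTriangular ht]
  apply Finset.prod_eq_one
  intro i _
  simp only [Matrix.add_apply, Matrix.one_apply_eq, Em, Fm, Matrix.mul_diagonal,
    Matrix.diagonal_mul]
  split_ifs <;> ring

lemma det_one_add_FME (M : Matrix (Fin n) (Fin n) R) :
    (1 + Fm R n r * M * Em R n r).det = 1 := by
  have ht : BlockTriangular (1 + Fm R n r * M * Em R n r) OrderDual.toDual := by
    intro i j hij
    have hji : (i:ℕ) < (j:ℕ) := hij
    have hne : i ≠ j := by intro h; subst h; exact lt_irrefl _ hji
    rw [Matrix.add_apply, Matrix.one_apply_ne hne, zero_add]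
    simp only [Em, Fm, Matrix.mul_diagonal, Matrix.diagonal_mul]
    split_ifs
    all_goals try ring
    all_goals (rename_i ha hb; exact absurd (hji.trans hb) ha)
  rw [Matrix.det_of_lowerTriangular _ ht]
  apply Finset.prod_eq_one
  intro i _
  simp only [Matrix.add_apply, Matrix.one_apply_eq, Em, Fm, Matrix.mul_diagonal,
    Matrix.diagonal_mul]
  split_ifs <;> ring

lemma det_EM (M : Matrix (Fin n) (Fin n) R) :
    (Em R n r * M + Fm R n r).det = (Em R n r * M * Em R n r + Fm R n r).det := by
  rw [← ring_id1 (Em R n r) (Fm R n r) M (Fm_mul_Em R n r) (Fm_mul_Fm R n r) (Em_add_Fm R n r),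
    det_mul, det_one_add_EMF, one_mul]

lemma det_ME (M : Matrix (Fin n) (Fin n) R) :
    (M * Em R n r + Fm R n r).det = (Em R n r * M * Em R n r + Fm R n r).det := by
  rw [← ring_id2 (Em R n r) (Fm R n r) M (Em_mul_Fm R n r) (Em_mul_Em R n r) (Fm_mul_Fm R n r)
    (Em_add_Fm R n r), det_mul, det_one_add_FME, mul_one]

lemma det_split (X : Matrix (Fin n) (Fin n) R) (hX : Fm R n r * X * Em R n r = 0) :
    X.det = (Em R n r + Fm R n r * X * Fm R n r).det * (Em R n r * X * Em R n r + Fm R n r).det := by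
  conv_lhs => rw [← ring_id3 (Em R n r) (Fm R n r) X (Em_mul_Fm R n r) (Fm_mul_Em R n r)
    (Em_mul_Em R n r) (Fm_mul_Fm R n r) (Em_add_Fm R n r) hX]
  rw [det_mul, det_EM]

lemma det_couple (At D D' : Matrix (Fin n) (Fin n) R)
    (hAD : Atᵀ * D' = 1) (hFD' : Fm R n r * D' * Em R n r = 0)
    (hDE : D * Em R n r = Em R n r * At) :
    (Em R n r * D * Em R n r + Fm R n r).det * (Em R n r * D' * Em R n r + Fm R n r).det = 1 := by
  have hED'E : Em R n r * (D' * Em R n r) = D' * Em R n r := by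
    have h0 : Fm R n r * (D' * Em R n r) = 0 := by rw [← mul_assoc, hFD']
    calc Em R n r * (D' * Em R n r)
        = Em R n r * (D' * Em R n r) + Fm R n r * (D' * Em R n r) := by rw [h0, add_zero]
    _ = (Em R n r + Fm R n r) * (D' * Em R n r) := (add_mul _ _ _).symm
    _ = D' * Em R n r := by rw [Em_add_Fm, one_mul]
  have hP : (D * Em R n r + Fm R n r)ᵀ * (D' * Em R n r + Fm R n r) = 1 := by
    rw [hDE, transpose_add, transpose_mul, Em_transpose, Fm_transpose, add_mul, mul_add, mul_add]
    rw [mul_assoc Atᵀ (Em R n r) (D' * Em R n r), hED'E, ← mul_assoc Atᵀ D' (Em R n r), hAD,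
      one_mul, mul_assoc Atᵀ (Em R n r) (Fm R n r), Em_mul_Fm, mul_zero, add_zero,
      ← mul_assoc (Fm R n r) D' (Em R n r), hFD', zero_add, Fm_mul_Fm, Em_add_Fm]
  have := congrArg Matrix.det hP
  rw [det_mul, det_transpose, det_one, det_ME R n r D, det_ME R n r D'] at this
  exact this

lemma W_mul_W :
    (fromBlocks 0 (-1) 1 0 : Matrix (Fin n ⊕ Fin n) (Fin n ⊕ Fin n) R) * fromBlocks 0 (-1) 1 0
      = -1 := by
  rw [fromBlocks_multiply, ← fromBlocks_one, fromBlocks_neg]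
  simp

lemma u_mul (g : Matrix (Fin n ⊕ Fin n) (Fin n ⊕ Fin n) R)
    (hg : gᵀ * fromBlocks 0 (-1) 1 0 * g = fromBlocks 0 (-1) 1 0) :
    (-(fromBlocks 0 (-1) 1 0) * gᵀ * fromBlocks 0 (-1) 1 0) * g = 1 := by
  rw [mul_assoc (-(fromBlocks 0 (-1) 1 0) * gᵀ) (fromBlocks 0 (-1) 1 0) g,
    mul_assoc (-(fromBlocks 0 (-1) 1 0)) gᵀ (fromBlocks 0 (-1) 1 0 * g),
    ← mul_assoc gᵀ (fromBlocks 0 (-1) 1 0) g, hg, neg_mul, W_mul_W, neg_neg]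

lemma u_blocks (A B C D : Matrix (Fin n) (Fin n) R) :
    -(fromBlocks 0 (-1) 1 0) * (fromBlocks A B C D)ᵀ * fromBlocks 0 (-1) 1 0
      = fromBlocks Dᵀ (-Bᵀ) (-Cᵀ) Aᵀ := by
  have hneg : -(fromBlocks 0 (-1) 1 0 : Matrix (Fin n ⊕ Fin n) (Fin n ⊕ Fin n) R)
      = fromBlocks 0 1 (-1) 0 := by
    rw [fromBlocks_neg]; simp
  rw [fromBlocks_transpose, hneg, fromBlocks_multiply, fromBlocks_multiply]
  simp

lemma sympAD' (A B D : Matrix (Fin n) (Fin n) R)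
    (hg : (fromBlocks A B 0 D)ᵀ * fromBlocks 0 (-1) 1 0 * (fromBlocks A B 0 D)
      = fromBlocks 0 (-1) 1 0) :
    Aᵀ * D = 1 := by
  rw [fromBlocks_transpose, fromBlocks_multiply, fromBlocks_multiply, fromBlocks_inj] at hg
  obtain ⟨-, h12, -, -⟩ := hg
  simp only [transpose_zero, Matrix.zero_mul, Matrix.mul_zero, Matrix.mul_one, Matrix.one_mul,
    zero_add, add_zero, Matrix.mul_neg, Matrix.neg_mul, mul_neg_one, neg_one_mul] at h12
  -- h12 : -(Aᵀ * D) = -1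
  exact neg_inj.mp h12

lemma key (σ τ : Matrix (Fin n ⊕ Fin n) (Fin n ⊕ Fin n) R)
    (hτ : τᵀ * fromBlocks 0 (-1) 1 0 * τ = fromBlocks 0 (-1) 1 0)
    (hσC : σ.toBlocks₂₁ = 0) (hτC : τ.toBlocks₂₁ = 0)
    (hστ : σ * fromBlocks (Fm R n r) (-(Em R n r)) (Em R n r) (Fm R n r)
         = fromBlocks (Fm R n r) (-(Em R n r)) (Em R n r) (Fm R n r) * τ) :
    σ.toBlocks₂₂.det * τ.toBlocks₂₂.det
      = ((Em R n r + Fm R n r * σ.toBlocks₂₂ * Fm R n r).det)^2 := by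
  obtain ⟨As, Bs, Cs, Ds, rfl⟩ : ∃ A B C D, σ = fromBlocks A B C D :=
    ⟨_, _, _, _, (fromBlocks_toBlocks σ).symm⟩
  obtain ⟨At, Bt, Ct, Dt, rfl⟩ : ∃ A B C D, τ = fromBlocks A B C D :=
    ⟨_, _, _, _, (fromBlocks_toBlocks τ).symm⟩
  simp only [toBlocks_fromBlocks₂₁, toBlocks_fromBlocks₂₂] at hσC hτC ⊢
  subst hσC; subst hτC
  have hAD : Atᵀ * Dt = 1 := sympAD' R n At Bt Dt hτ
  rw [fromBlocks_multiply, fromBlocks_multiply, fromBlocks_inj] at hστ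
  obtain ⟨h11, h12, h21, h22⟩ := hστ
  simp only [Matrix.zero_mul, Matrix.mul_zero, zero_add, add_zero] at h21 h22
  -- h21 : Ds * Em = Em * At ; h22 : Ds * Fm = Em * Bt + Fm * Dt
  have hFDsE : Fm R n r * Ds * Em R n r = 0 := by
    rw [mul_assoc, h21, ← mul_assoc, Fm_mul_Em, Matrix.zero_mul]
  have hFDt : Fm R n r * Dt = Fm R n r * Ds * Fm R n r := by
    have h := congrArg (fun X => Fm R n r * X) h22
    simp only [mul_add, ← mul_assoc, Fm_mul_Em, Fm_mul_Fm, Matrix.zero_mul, zero_add] at h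
    exact h.symm
  have hFDtE : Fm R n r * Dt * Em R n r = 0 := by
    rw [hFDt, mul_assoc, Fm_mul_Em, Matrix.mul_zero]
  have hFDtF : Fm R n r * Dt * Fm R n r = Fm R n r * Ds * Fm R n r := by
    rw [hFDt, mul_assoc, Fm_mul_Fm]
  have hsplit_s := det_split R n r Ds hFDsE
  have hsplit_t := det_split R n r Dt hFDtE
  have hc := det_couple R n r At Ds Dt hAD hFDtE h21
  rw [hsplit_s, hsplit_t, hFDtF]
  calc (Em R n r + Fm R n r * Ds * Fm R n r).det * (Em R n r * Ds * Em R n r + Fm R n r).det *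
        ((Em R n r + Fm R n r * Ds * Fm R n r).det * (Em R n r * Dt * Em R n r + Fm R n r).det)
      = (Em R n r + Fm R n r * Ds * Fm R n r).det ^ 2 *
        ((Em R n r * Ds * Em R n r + Fm R n r).det * (Em R n r * Dt * Em R n r + Fm R n r).det) := by
        ring
  _ = (Em R n r + Fm R n r * Ds * Fm R n r).det ^ 2 := by rw [hc, mul_one]

lemma symp_mul (g h : Matrix (Fin n ⊕ Fin n) (Fin n ⊕ Fin n) R)
    (hg : gᵀ * fromBlocks 0 (-1) 1 0 * g = fromBlocks 0 (-1) 1 0)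
    (hh : hᵀ * fromBlocks 0 (-1) 1 0 * h = fromBlocks 0 (-1) 1 0) :
    (g * h)ᵀ * fromBlocks 0 (-1) 1 0 * (g * h) = fromBlocks 0 (-1) 1 0 := by
  have e : (g * h)ᵀ * fromBlocks 0 (-1) 1 0 * (g * h)
      = hᵀ * (gᵀ * fromBlocks 0 (-1) 1 0 * g) * h := by
    rw [transpose_mul]; simp only [mul_assoc]
  rw [e, hg, hh]

lemma symp_u (g u : Matrix (Fin n ⊕ Fin n) (Fin n ⊕ Fin n) R)
    (hg : gᵀ * fromBlocks 0 (-1) 1 0 * g = fromBlocks 0 (-1) 1 0)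
    (h2 : g * u = 1) :
    uᵀ * fromBlocks 0 (-1) 1 0 * u = fromBlocks 0 (-1) 1 0 := by
  have e : (g * u)ᵀ * fromBlocks 0 (-1) 1 0 * (g * u)
      = uᵀ * (gᵀ * fromBlocks 0 (-1) 1 0 * g) * u := by
    rw [transpose_mul]; simp only [mul_assoc]
  rw [h2, transpose_one, one_mul, mul_one, hg] at e
  exact e.symm

end MatrixIds

section Reduce
variable {S : Type*} [CommRing S] (f : ℤ →+* S) (n r : ℕ)

lemma map_wSymp : (wSymp n).map f = (fromBlocks 0 (-1) 1 0 : Matrix _ _ S) := by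
  ext i j
  cases i <;> cases j <;>
    simp [wSymp, Matrix.map_apply, Matrix.one_apply, apply_ite (⇑f)]

lemma map_wCusp : (wCusp n r).map f
    = fromBlocks (Fm S n r) (-(Em S n r)) (Em S n r) (Fm S n r) := by
  ext i j
  cases i <;> cases j <;>
      simp [wCusp, Em, Fm, Matrix.map_apply, Matrix.diagonal_apply, apply_ite (⇑f)] <;>
    split_ifs <;> simp

lemma map_symp (g : Matrix (Fin n ⊕ Fin n) (Fin n ⊕ Fin n) ℤ)
    (hg : gᵀ * wSymp n * g = wSymp n) :
    (g.map f)ᵀ * fromBlocks 0 (-1) 1 0 * (g.map f) = fromBlocks 0 (-1) 1 0 := by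
  have h := congrArg (fun M => M.map (⇑f)) hg
  simp only [Matrix.map_mul] at h
  rw [map_wSymp f n, Matrix.transpose_map] at h
  exact h

lemma toBlocks₂₁_map (g : Matrix (Fin n ⊕ Fin n) (Fin n ⊕ Fin n) ℤ) :
    (g.map f).toBlocks₂₁ = g.toBlocks₂₁.map f := rfl

lemma toBlocks₂₂_map (g : Matrix (Fin n ⊕ Fin n) (Fin n ⊕ Fin n) ℤ) :
    (g.map f).toBlocks₂₂ = g.toBlocks₂₂.map f := rfl

end Reduce

end Stmt16Aux


open Stmt16Aux in
theorem stmt_16 (p : ℕ) [Fact p.Prime] (hp2 : p ≠ 2) (n : ℕ) (hn : 1 ≤ n)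
    (r : ℕ) (hr : r ≤ n)
    (η η' κ κ' : Matrix (Fin n ⊕ Fin n) (Fin n ⊕ Fin n) ℤ)
    (hη : ηᵀ * wSymp n * η = wSymp n) (hη' : η'ᵀ * wSymp n * η' = wSymp n)
    (hκ : κᵀ * wSymp n * κ = wSymp n) (hκ' : κ'ᵀ * wSymp n * κ' = wSymp n)
    (hηP : η.toBlocks₂₁ = 0) (hη'P : η'.toBlocks₂₁ = 0)
    (hκΓ : ∀ i j, (p : ℤ) ∣ κ.toBlocks₂₁ i j) (hκ'Γ : ∀ i j, (p : ℤ) ∣ κ'.toBlocks₂₁ i j)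
    (heq : η * wCusp n r * κ = η' * wCusp n r * κ') :
    legendreSym p (η.toBlocks₂₂).det * legendreSym p (κ.toBlocks₂₂).det =
        legendreSym p (η'.toBlocks₂₂).det * legendreSym p (κ'.toBlocks₂₂).det ∧
      (legendreSym p (η.toBlocks₂₂).det * legendreSym p (κ.toBlocks₂₂).det = 1 ∨
        legendreSym p (η.toBlocks₂₂).det * legendreSym p (κ.toBlocks₂₂).det = -1) := by
  -- reduced symplectic conditions
  have hηs := map_symp (Int.castRingHom (ZMod p)) n η hη
  have hη's := map_symp (Int.castRingHom (ZMod p)) n η' hη'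
  have hκs := map_symp (Int.castRingHom (ZMod p)) n κ hκ
  have hκ's := map_symp (Int.castRingHom (ZMod p)) n κ' hκ'
  -- reduced C-blocks vanish
  have hηmC : ((η.map (⇑(Int.castRingHom (ZMod p))))).toBlocks₂₁ = 0 := by
    rw [toBlocks₂₁_map, hηP]
    ext i j
    simp [Matrix.map_apply]
  have hη'mC : ((η'.map (⇑(Int.castRingHom (ZMod p))))).toBlocks₂₁ = 0 := by
    rw [toBlocks₂₁_map, hη'P]
    ext i j
    simp [Matrix.map_apply]
  have hκmC : ((κ.map (⇑(Int.castRingHom (ZMod p))))).toBlocks₂₁ = 0 := by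
    rw [toBlocks₂₁_map]
    ext i j
    simp only [Matrix.map_apply, Matrix.zero_apply, Int.coe_castRingHom]
    exact (ZMod.intCast_zmod_eq_zero_iff_dvd _ p).mpr (hκΓ i j)
  have hκ'mC : ((κ'.map (⇑(Int.castRingHom (ZMod p))))).toBlocks₂₁ = 0 := by
    rw [toBlocks₂₁_map]
    ext i j
    simp only [Matrix.map_apply, Matrix.zero_apply, Int.coe_castRingHom]
    exact (ZMod.intCast_zmod_eq_zero_iff_dvd _ p).mpr (hκ'Γ i j)
  -- reduced double-coset equation
  have heqm : (η.map (⇑(Int.castRingHom (ZMod p)))) * (fromBlocks (Fm (ZMod p) n r) (-(Em (ZMod p) n r)) (Em (ZMod p) n r) (Fm (ZMod p) n r)) * (κ.map (⇑(Int.castRingHom (ZMod p)))) = (η'.map (⇑(Int.castRingHom (ZMod p)))) * (fromBlocks (Fm (ZMod p) n r) (-(Em (ZMod p) n r)) (Em (ZMod p) n r) (Fm (ZMod p) n r)) * (κ'.map (⇑(Int.castRingHom (ZMod p)))) := by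
    have h := congrArg (fun M => M.map (⇑(Int.castRingHom (ZMod p)))) heq
    simp only [Matrix.map_mul] at h
    rwa [map_wCusp (Int.castRingHom (ZMod p)) n r] at h
  -- inverses
  have huη'1 : (-(fromBlocks 0 (-1) 1 0 : Matrix (Fin n ⊕ Fin n) (Fin n ⊕ Fin n) (ZMod p)) * ((η'.map (⇑(Int.castRingHom (ZMod p)))))ᵀ * (fromBlocks 0 (-1) 1 0 : Matrix (Fin n ⊕ Fin n) (Fin n ⊕ Fin n) (ZMod p))) * (η'.map (⇑(Int.castRingHom (ZMod p)))) = 1 := u_mul _ n (η'.map (⇑(Int.castRingHom (ZMod p)))) hη's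
  have huη'2 : (η'.map (⇑(Int.castRingHom (ZMod p)))) * (-(fromBlocks 0 (-1) 1 0 : Matrix (Fin n ⊕ Fin n) (Fin n ⊕ Fin n) (ZMod p)) * ((η'.map (⇑(Int.castRingHom (ZMod p)))))ᵀ * (fromBlocks 0 (-1) 1 0 : Matrix (Fin n ⊕ Fin n) (Fin n ⊕ Fin n) (ZMod p))) = 1 := mul_eq_one_comm.mp huη'1
  have huκ1 : (-(fromBlocks 0 (-1) 1 0 : Matrix (Fin n ⊕ Fin n) (Fin n ⊕ Fin n) (ZMod p)) * ((κ.map (⇑(Int.castRingHom (ZMod p)))))ᵀ * (fromBlocks 0 (-1) 1 0 : Matrix (Fin n ⊕ Fin n) (Fin n ⊕ Fin n) (ZMod p))) * (κ.map (⇑(Int.castRingHom (ZMod p)))) = 1 := u_mul _ n (κ.map (⇑(Int.castRingHom (ZMod p)))) hκs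
  have huκ2 : (κ.map (⇑(Int.castRingHom (ZMod p)))) * (-(fromBlocks 0 (-1) 1 0 : Matrix (Fin n ⊕ Fin n) (Fin n ⊕ Fin n) (ZMod p)) * ((κ.map (⇑(Int.castRingHom (ZMod p)))))ᵀ * (fromBlocks 0 (-1) 1 0 : Matrix (Fin n ⊕ Fin n) (Fin n ⊕ Fin n) (ZMod p))) = 1 := mul_eq_one_comm.mp huκ1
  -- the relation σ ⬝ Wc = Wc ⬝ τ
  have hη'σ : (η'.map (⇑(Int.castRingHom (ZMod p)))) * ((-(fromBlocks 0 (-1) 1 0 : Matrix (Fin n ⊕ Fin n) (Fin n ⊕ Fin n) (ZMod p)) * ((η'.map (⇑(Int.castRingHom (ZMod p)))))ᵀ * (fromBlocks 0 (-1) 1 0 : Matrix (Fin n ⊕ Fin n) (Fin n ⊕ Fin n) (ZMod p))) * (η.map (⇑(Int.castRingHom (ZMod p))))) = (η.map (⇑(Int.castRingHom (ZMod p)))) := by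
    rw [← mul_assoc, huη'2, one_mul]
  have hτκ : ((κ'.map (⇑(Int.castRingHom (ZMod p)))) * (-(fromBlocks 0 (-1) 1 0 : Matrix (Fin n ⊕ Fin n) (Fin n ⊕ Fin n) (ZMod p)) * ((κ.map (⇑(Int.castRingHom (ZMod p)))))ᵀ * (fromBlocks 0 (-1) 1 0 : Matrix (Fin n ⊕ Fin n) (Fin n ⊕ Fin n) (ZMod p)))) * (κ.map (⇑(Int.castRingHom (ZMod p)))) = (κ'.map (⇑(Int.castRingHom (ZMod p)))) := by
    rw [mul_assoc, huκ1, mul_one]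
  have h3 : ((-(fromBlocks 0 (-1) 1 0 : Matrix (Fin n ⊕ Fin n) (Fin n ⊕ Fin n) (ZMod p)) * ((η'.map (⇑(Int.castRingHom (ZMod p)))))ᵀ * (fromBlocks 0 (-1) 1 0 : Matrix (Fin n ⊕ Fin n) (Fin n ⊕ Fin n) (ZMod p))) * (η.map (⇑(Int.castRingHom (ZMod p))))) * (fromBlocks (Fm (ZMod p) n r) (-(Em (ZMod p) n r)) (Em (ZMod p) n r) (Fm (ZMod p) n r)) * (κ.map (⇑(Int.castRingHom (ZMod p)))) = (fromBlocks (Fm (ZMod p) n r) (-(Em (ZMod p) n r)) (Em (ZMod p) n r) (Fm (ZMod p) n r)) * ((κ'.map (⇑(Int.castRingHom (ZMod p)))) * (-(fromBlocks 0 (-1) 1 0 : Matrix (Fin n ⊕ Fin n) (Fin n ⊕ Fin n) (ZMod p)) * ((κ.map (⇑(Int.castRingHom (ZMod p)))))ᵀ * (fromBlocks 0 (-1) 1 0 : Matrix (Fin n ⊕ Fin n) (Fin n ⊕ Fin n) (ZMod p)))) * (κ.map (⇑(Int.castRingHom (ZMod p)))) := by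
    have h2 : (η'.map (⇑(Int.castRingHom (ZMod p)))) * (((-(fromBlocks 0 (-1) 1 0 : Matrix (Fin n ⊕ Fin n) (Fin n ⊕ Fin n) (ZMod p)) * ((η'.map (⇑(Int.castRingHom (ZMod p)))))ᵀ * (fromBlocks 0 (-1) 1 0 : Matrix (Fin n ⊕ Fin n) (Fin n ⊕ Fin n) (ZMod p))) * (η.map (⇑(Int.castRingHom (ZMod p))))) * (fromBlocks (Fm (ZMod p) n r) (-(Em (ZMod p) n r)) (Em (ZMod p) n r) (Fm (ZMod p) n r)) * (κ.map (⇑(Int.castRingHom (ZMod p))))) = (η'.map (⇑(Int.castRingHom (ZMod p)))) * ((fromBlocks (Fm (ZMod p) n r) (-(Em (ZMod p) n r)) (Em (ZMod p) n r) (Fm (ZMod p) n r)) * ((κ'.map (⇑(Int.castRingHom (ZMod p)))) * (-(fromBlocks 0 (-1) 1 0 : Matrix (Fin n ⊕ Fin n) (Fin n ⊕ Fin n) (ZMod p)) * ((κ.map (⇑(Int.castRingHom (ZMod p)))))ᵀ * (fromBlocks 0 (-1) 1 0 : Matrix (Fin n ⊕ Fin n) (Fin n ⊕ Fin n) (ZMod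 p)))) * (κ.map (⇑(Int.castRingHom (ZMod p))))) := by
      calc (η'.map (⇑(Int.castRingHom (ZMod p)))) * (((-(fromBlocks 0 (-1) 1 0 : Matrix (Fin n ⊕ Fin n) (Fin n ⊕ Fin n) (ZMod p)) * ((η'.map (⇑(Int.castRingHom (ZMod p)))))ᵀ * (fromBlocks 0 (-1) 1 0 : Matrix (Fin n ⊕ Fin n) (Fin n ⊕ Fin n) (ZMod p))) * (η.map (⇑(Int.castRingHom (ZMod p))))) * (fromBlocks (Fm (ZMod p) n r) (-(Em (ZMod p) n r)) (Em (ZMod p) n r) (Fm (ZMod p) n r)) * (κ.map (⇑(Int.castRingHom (ZMod p))))) = ((η'.map (⇑(Int.castRingHom (ZMod p)))) * ((-(fromBlocks 0 (-1) 1 0 : Matrix (Fin n ⊕ Fin n) (Fin n ⊕ Fin n) (ZMod p)) * ((η'.map (⇑(Int.castRingHom (ZMod p)))))ᵀ * (fromBlocks 0 (-1) 1 0 : Matrix (Fin n ⊕ Fin n) (Fin n ⊕ Fin n) (ZMod p))) * (η.map (⇑(Int.castRingHom (ZMod p)))))) * (fromBlocks (Fm (ZMod p) n r) (-(Em (ZMod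 p) n r)) (Em (ZMod p) n r) (Fm (ZMod p) n r)) * (κ.map (⇑(Int.castRingHom (ZMod p)))) := by
            simp only [mul_assoc]
      _ = (η.map (⇑(Int.castRingHom (ZMod p)))) * (fromBlocks (Fm (ZMod p) n r) (-(Em (ZMod p) n r)) (Em (ZMod p) n r) (Fm (ZMod p) n r)) * (κ.map (⇑(Int.castRingHom (ZMod p)))) := by rw [hη'σ]
      _ = (η'.map (⇑(Int.castRingHom (ZMod p)))) * (fromBlocks (Fm (ZMod p) n r) (-(Em (ZMod p) n r)) (Em (ZMod p) n r) (Fm (ZMod p) n r)) * (κ'.map (⇑(Int.castRingHom (ZMod p)))) := heqm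
      _ = (η'.map (⇑(Int.castRingHom (ZMod p)))) * (fromBlocks (Fm (ZMod p) n r) (-(Em (ZMod p) n r)) (Em (ZMod p) n r) (Fm (ZMod p) n r)) * (((κ'.map (⇑(Int.castRingHom (ZMod p)))) * (-(fromBlocks 0 (-1) 1 0 : Matrix (Fin n ⊕ Fin n) (Fin n ⊕ Fin n) (ZMod p)) * ((κ.map (⇑(Int.castRingHom (ZMod p)))))ᵀ * (fromBlocks 0 (-1) 1 0 : Matrix (Fin n ⊕ Fin n) (Fin n ⊕ Fin n) (ZMod p)))) * (κ.map (⇑(Int.castRingHom (ZMod p))))) := by rw [hτκ]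
      _ = (η'.map (⇑(Int.castRingHom (ZMod p)))) * ((fromBlocks (Fm (ZMod p) n r) (-(Em (ZMod p) n r)) (Em (ZMod p) n r) (Fm (ZMod p) n r)) * ((κ'.map (⇑(Int.castRingHom (ZMod p)))) * (-(fromBlocks 0 (-1) 1 0 : Matrix (Fin n ⊕ Fin n) (Fin n ⊕ Fin n) (ZMod p)) * ((κ.map (⇑(Int.castRingHom (ZMod p)))))ᵀ * (fromBlocks 0 (-1) 1 0 : Matrix (Fin n ⊕ Fin n) (Fin n ⊕ Fin n) (ZMod p)))) * (κ.map (⇑(Int.castRingHom (ZMod p))))) := by simp only [mul_assoc]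
    calc ((-(fromBlocks 0 (-1) 1 0 : Matrix (Fin n ⊕ Fin n) (Fin n ⊕ Fin n) (ZMod p)) * ((η'.map (⇑(Int.castRingHom (ZMod p)))))ᵀ * (fromBlocks 0 (-1) 1 0 : Matrix (Fin n ⊕ Fin n) (Fin n ⊕ Fin n) (ZMod p))) * (η.map (⇑(Int.castRingHom (ZMod p))))) * (fromBlocks (Fm (ZMod p) n r) (-(Em (ZMod p) n r)) (Em (ZMod p) n r) (Fm (ZMod p) n r)) * (κ.map (⇑(Int.castRingHom (ZMod p)))) = 1 * (((-(fromBlocks 0 (-1) 1 0 : Matrix (Fin n ⊕ Fin n) (Fin n ⊕ Fin n) (ZMod p)) * ((η'.map (⇑(Int.castRingHom (ZMod p)))))ᵀ * (fromBlocks 0 (-1) 1 0 : Matrix (Fin n ⊕ Fin n) (Fin n ⊕ Fin n) (ZMod p))) * (η.map (⇑(Int.castRingHom (ZMod p))))) * (fromBlocks (Fm (ZMod p) n r) (-(Em (ZMod p) n r)) (Em (ZMod p) n r) (Fm (ZMod p) n r)) * (κ.map (⇑(Int.castRingHom (ZMod p))))) := (one_mul _).symm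
    _ = (-(fromBlocks 0 (-1) 1 0 : Matrix (Fin n ⊕ Fin n) (Fin n ⊕ Fin n) (ZMod p)) * ((η'.map (⇑(Int.castRingHom (ZMod p)))))ᵀ * (fromBlocks 0 (-1) 1 0 : Matrix (Fin n ⊕ Fin n) (Fin n ⊕ Fin n) (ZMod p))) * ((η'.map (⇑(Int.castRingHom (ZMod p)))) * (((-(fromBlocks 0 (-1) 1 0 : Matrix (Fin n ⊕ Fin n) (Fin n ⊕ Fin n) (ZMod p)) * ((η'.map (⇑(Int.castRingHom (ZMod p)))))ᵀ * (fromBlocks 0 (-1) 1 0 : Matrix (Fin n ⊕ Fin n) (Fin n ⊕ Fin n) (ZMod p))) * (η.map (⇑(Int.castRingHom (ZMod p))))) * (fromBlocks (Fm (ZMod p) n r) (-(Em (ZMod p) n r)) (Em (ZMod p) n r) (Fm (ZMod p) n r)) * (κ.map (⇑(Int.castRingHom (ZMod p)))))) := by rw [← huη'1]; simp only [mul_assoc]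
    _ = (-(fromBlocks 0 (-1) 1 0 : Matrix (Fin n ⊕ Fin n) (Fin n ⊕ Fin n) (ZMod p)) * ((η'.map (⇑(Int.castRingHom (ZMod p)))))ᵀ * (fromBlocks 0 (-1) 1 0 : Matrix (Fin n ⊕ Fin n) (Fin n ⊕ Fin n) (ZMod p))) * ((η'.map (⇑(Int.castRingHom (ZMod p)))) * ((fromBlocks (Fm (ZMod p) n r) (-(Em (ZMod p) n r)) (Em (ZMod p) n r) (Fm (ZMod p) n r)) * ((κ'.map (⇑(Int.castRingHom (ZMod p)))) * (-(fromBlocks 0 (-1) 1 0 : Matrix (Fin n ⊕ Fin n) (Fin n ⊕ Fin n) (ZMod p)) * ((κ.map (⇑(Int.castRingHom (ZMod p)))))ᵀ * (fromBlocks 0 (-1) 1 0 : Matrix (Fin n ⊕ Fin n) (Fin n ⊕ Fin n) (ZMod p)))) * (κ.map (⇑(Int.castRingHom (ZMod p)))))) := by rw [h2]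
    _ = ((-(fromBlocks 0 (-1) 1 0 : Matrix (Fin n ⊕ Fin n) (Fin n ⊕ Fin n) (ZMod p)) * ((η'.map (⇑(Int.castRingHom (ZMod p)))))ᵀ * (fromBlocks 0 (-1) 1 0 : Matrix (Fin n ⊕ Fin n) (Fin n ⊕ Fin n) (ZMod p))) * (η'.map (⇑(Int.castRingHom (ZMod p))))) * ((fromBlocks (Fm (ZMod p) n r) (-(Em (ZMod p) n r)) (Em (ZMod p) n r) (Fm (ZMod p) n r)) * ((κ'.map (⇑(Int.castRingHom (ZMod p)))) * (-(fromBlocks 0 (-1) 1 0 : Matrix (Fin n ⊕ Fin n) (Fin n ⊕ Fin n) (ZMod p)) * ((κ.map (⇑(Int.castRingHom (ZMod p)))))ᵀ * (fromBlocks 0 (-1) 1 0 : Matrix (Fin n ⊕ Fin n) (Fin n ⊕ Fin n) (ZMod p)))) * (κ.map (⇑(Int.castRingHom (ZMod p))))) := (mul_assoc _ _ _).symm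
    _ = (fromBlocks (Fm (ZMod p) n r) (-(Em (ZMod p) n r)) (Em (ZMod p) n r) (Fm (ZMod p) n r)) * ((κ'.map (⇑(Int.castRingHom (ZMod p)))) * (-(fromBlocks 0 (-1) 1 0 : Matrix (Fin n ⊕ Fin n) (Fin n ⊕ Fin n) (ZMod p)) * ((κ.map (⇑(Int.castRingHom (ZMod p)))))ᵀ * (fromBlocks 0 (-1) 1 0 : Matrix (Fin n ⊕ Fin n) (Fin n ⊕ Fin n) (ZMod p)))) * (κ.map (⇑(Int.castRingHom (ZMod p)))) := by rw [huη'1, one_mul]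
  have hστ : ((-(fromBlocks 0 (-1) 1 0 : Matrix (Fin n ⊕ Fin n) (Fin n ⊕ Fin n) (ZMod p)) * ((η'.map (⇑(Int.castRingHom (ZMod p)))))ᵀ * (fromBlocks 0 (-1) 1 0 : Matrix (Fin n ⊕ Fin n) (Fin n ⊕ Fin n) (ZMod p))) * (η.map (⇑(Int.castRingHom (ZMod p))))) * (fromBlocks (Fm (ZMod p) n r) (-(Em (ZMod p) n r)) (Em (ZMod p) n r) (Fm (ZMod p) n r)) = (fromBlocks (Fm (ZMod p) n r) (-(Em (ZMod p) n r)) (Em (ZMod p) n r) (Fm (ZMod p) n r)) * ((κ'.map (⇑(Int.castRingHom (ZMod p)))) * (-(fromBlocks 0 (-1) 1 0 : Matrix (Fin n ⊕ Fin n) (Fin n ⊕ Fin n) (ZMod p)) * ((κ.map (⇑(Int.castRingHom (ZMod p)))))ᵀ * (fromBlocks 0 (-1) 1 0 : Matrix (Fin n ⊕ Fin n) (Fin n ⊕ Fin n) (ZMod p)))) := by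
    calc ((-(fromBlocks 0 (-1) 1 0 : Matrix (Fin n ⊕ Fin n) (Fin n ⊕ Fin n) (ZMod p)) * ((η'.map (⇑(Int.castRingHom (ZMod p)))))ᵀ * (fromBlocks 0 (-1) 1 0 : Matrix (Fin n ⊕ Fin n) (Fin n ⊕ Fin n) (ZMod p))) * (η.map (⇑(Int.castRingHom (ZMod p))))) * (fromBlocks (Fm (ZMod p) n r) (-(Em (ZMod p) n r)) (Em (ZMod p) n r) (Fm (ZMod p) n r)) = ((-(fromBlocks 0 (-1) 1 0 : Matrix (Fin n ⊕ Fin n) (Fin n ⊕ Fin n) (ZMod p)) * ((η'.map (⇑(Int.castRingHom (ZMod p)))))ᵀ * (fromBlocks 0 (-1) 1 0 : Matrix (Fin n ⊕ Fin n) (Fin n ⊕ Fin n) (ZMod p))) * (η.map (⇑(Int.castRingHom (ZMod p))))) * (fromBlocks (Fm (ZMod p) n r) (-(Em (ZMod p) n r)) (Em (ZMod p) n r) (Fm (ZMod p) n r)) * 1 := (mul_one _).symm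
    _ = ((-(fromBlocks 0 (-1) 1 0 : Matrix (Fin n ⊕ Fin n) (Fin n ⊕ Fin n) (ZMod p)) * ((η'.map (⇑(Int.castRingHom (ZMod p)))))ᵀ * (fromBlocks 0 (-1) 1 0 : Matrix (Fin n ⊕ Fin n) (Fin n ⊕ Fin n) (ZMod p))) * (η.map (⇑(Int.castRingHom (ZMod p))))) * (fromBlocks (Fm (ZMod p) n r) (-(Em (ZMod p) n r)) (Em (ZMod p) n r) (Fm (ZMod p) n r)) * ((κ.map (⇑(Int.castRingHom (ZMod p)))) * (-(fromBlocks 0 (-1) 1 0 : Matrix (Fin n ⊕ Fin n) (Fin n ⊕ Fin n) (ZMod p)) * ((κ.map (⇑(Int.castRingHom (ZMod p)))))ᵀ * (fromBlocks 0 (-1) 1 0 : Matrix (Fin n ⊕ Fin n) (Fin n ⊕ Fin n) (ZMod p)))) := by rw [huκ2]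
    _ = (((-(fromBlocks 0 (-1) 1 0 : Matrix (Fin n ⊕ Fin n) (Fin n ⊕ Fin n) (ZMod p)) * ((η'.map (⇑(Int.castRingHom (ZMod p)))))ᵀ * (fromBlocks 0 (-1) 1 0 : Matrix (Fin n ⊕ Fin n) (Fin n ⊕ Fin n) (ZMod p))) * (η.map (⇑(Int.castRingHom (ZMod p))))) * (fromBlocks (Fm (ZMod p) n r) (-(Em (ZMod p) n r)) (Em (ZMod p) n r) (Fm (ZMod p) n r)) * (κ.map (⇑(Int.castRingHom (ZMod p))))) * (-(fromBlocks 0 (-1) 1 0 : Matrix (Fin n ⊕ Fin n) (Fin n ⊕ Fin n) (ZMod p)) * ((κ.map (⇑(Int.castRingHom (ZMod p)))))ᵀ * (fromBlocks 0 (-1) 1 0 : Matrix (Fin n ⊕ Fin n) (Fin n ⊕ Fin n) (ZMod p))) := by simp only [mul_assoc]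
    _ = ((fromBlocks (Fm (ZMod p) n r) (-(Em (ZMod p) n r)) (Em (ZMod p) n r) (Fm (ZMod p) n r)) * ((κ'.map (⇑(Int.castRingHom (ZMod p)))) * (-(fromBlocks 0 (-1) 1 0 : Matrix (Fin n ⊕ Fin n) (Fin n ⊕ Fin n) (ZMod p)) * ((κ.map (⇑(Int.castRingHom (ZMod p)))))ᵀ * (fromBlocks 0 (-1) 1 0 : Matrix (Fin n ⊕ Fin n) (Fin n ⊕ Fin n) (ZMod p)))) * (κ.map (⇑(Int.castRingHom (ZMod p))))) * (-(fromBlocks 0 (-1) 1 0 : Matrix (Fin n ⊕ Fin n) (Fin n ⊕ Fin n) (ZMod p)) * ((κ.map (⇑(Int.castRingHom (ZMod p)))))ᵀ * (fromBlocks 0 (-1) 1 0 : Matrix (Fin n ⊕ Fin n) (Fin n ⊕ Fin n) (ZMod p))) := by rw [h3]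
    _ = (fromBlocks (Fm (ZMod p) n r) (-(Em (ZMod p) n r)) (Em (ZMod p) n r) (Fm (ZMod p) n r)) * ((κ'.map (⇑(Int.castRingHom (ZMod p)))) * (-(fromBlocks 0 (-1) 1 0 : Matrix (Fin n ⊕ Fin n) (Fin n ⊕ Fin n) (ZMod p)) * ((κ.map (⇑(Int.castRingHom (ZMod p)))))ᵀ * (fromBlocks 0 (-1) 1 0 : Matrix (Fin n ⊕ Fin n) (Fin n ⊕ Fin n) (ZMod p)))) * ((κ.map (⇑(Int.castRingHom (ZMod p)))) * (-(fromBlocks 0 (-1) 1 0 : Matrix (Fin n ⊕ Fin n) (Fin n ⊕ Fin n) (ZMod p)) * ((κ.map (⇑(Int.castRingHom (ZMod p)))))ᵀ * (fromBlocks 0 (-1) 1 0 : Matrix (Fin n ⊕ Fin n) (Fin n ⊕ Fin n) (ZMod p)))) := by simp only [mul_assoc]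
    _ = (fromBlocks (Fm (ZMod p) n r) (-(Em (ZMod p) n r)) (Em (ZMod p) n r) (Fm (ZMod p) n r)) * ((κ'.map (⇑(Int.castRingHom (ZMod p)))) * (-(fromBlocks 0 (-1) 1 0 : Matrix (Fin n ⊕ Fin n) (Fin n ⊕ Fin n) (ZMod p)) * ((κ.map (⇑(Int.castRingHom (ZMod p)))))ᵀ * (fromBlocks 0 (-1) 1 0 : Matrix (Fin n ⊕ Fin n) (Fin n ⊕ Fin n) (ZMod p)))) := by rw [huκ2, mul_one]
  -- τ is symplectic
  have hτs : ((κ'.map (⇑(Int.castRingHom (ZMod p)))) * (-(fromBlocks 0 (-1) 1 0 : Matrix (Fin n ⊕ Fin n) (Fin n ⊕ Fin n) (ZMod p)) * ((κ.map (⇑(Int.castRingHom (ZMod p)))))ᵀ * (fromBlocks 0 (-1) 1 0 : Matrix (Fin n ⊕ Fin n) (Fin n ⊕ Fin n) (ZMod p))))ᵀ * (fromBlocks 0 (-1) 1 0 : Matrix (Fin n ⊕ Fin n) (Fin n ⊕ Fin n) (ZMod p)) * ((κ'.map (⇑(Int.castRingHom (ZMod p)))) * (-(fromBlocks 0 (-1)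 1 0 : Matrix (Fin n ⊕ Fin n) (Fin n ⊕ Fin n) (ZMod p)) * ((κ.map (⇑(Int.castRingHom (ZMod p)))))ᵀ * (fromBlocks 0 (-1) 1 0 : Matrix (Fin n ⊕ Fin n) (Fin n ⊕ Fin n) (ZMod p)))) = (fromBlocks 0 (-1) 1 0 : Matrix (Fin n ⊕ Fin n) (Fin n ⊕ Fin n) (ZMod p)) :=
    symp_mul _ n (κ'.map (⇑(Int.castRingHom (ZMod p)))) (-(fromBlocks 0 (-1) 1 0 : Matrix (Fin n ⊕ Fin n) (Fin n ⊕ Fin n) (ZMod p)) * ((κ.map (⇑(Int.castRingHom (ZMod p)))))ᵀ * (fromBlocks 0 (-1) 1 0 : Matrix (Fin n ⊕ Fin n) (Fin n ⊕ Fin n) (ZMod p))) hκ's (symp_u _ n (κ.map (⇑(Int.castRingHom (ZMod p)))) (-(fromBlocks 0 (-1) 1 0 : Matrix (Fin n ⊕ Fin n) (Fin n ⊕ Fin n) (ZMod p)) * ((κ.map (⇑(Int.castRingHom (ZMod p)))))ᵀ * (fromBlocks 0 (-1) 1 0 : Matrix (Fin n ⊕ Fin n) (Fin n ⊕ Fin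 n) (ZMod p))) hκs huκ2)
  -- block forms
  have hηmB : (η.map (⇑(Int.castRingHom (ZMod p)))) = fromBlocks ((η.map (⇑(Int.castRingHom (ZMod p)))).toBlocks₁₁) ((η.map (⇑(Int.castRingHom (ZMod p)))).toBlocks₁₂) 0 ((η.map (⇑(Int.castRingHom (ZMod p)))).toBlocks₂₂) := by
    conv_lhs => rw [← fromBlocks_toBlocks ((η.map (⇑(Int.castRingHom (ZMod p)))))]
    rw [hηmC]
  have hη'mB : (η'.map (⇑(Int.castRingHom (ZMod p)))) = fromBlocks ((η'.map (⇑(Int.castRingHom (ZMod p)))).toBlocks₁₁) ((η'.map (⇑(Int.castRingHom (ZMod p)))).toBlocks₁₂) 0 ((η'.map (⇑(Int.castRingHom (ZMod p)))).toBlocks₂₂) := by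
    conv_lhs => rw [← fromBlocks_toBlocks ((η'.map (⇑(Int.castRingHom (ZMod p)))))]
    rw [hη'mC]
  have hκmB : (κ.map (⇑(Int.castRingHom (ZMod p)))) = fromBlocks ((κ.map (⇑(Int.castRingHom (ZMod p)))).toBlocks₁₁) ((κ.map (⇑(Int.castRingHom (ZMod p)))).toBlocks₁₂) 0 ((κ.map (⇑(Int.castRingHom (ZMod p)))).toBlocks₂₂) := by
    conv_lhs => rw [← fromBlocks_toBlocks ((κ.map (⇑(Int.castRingHom (ZMod p)))))]
    rw [hκmC]
  have hκ'mB : (κ'.map (⇑(Int.castRingHom (ZMod p)))) = fromBlocks ((κ'.map (⇑(Int.castRingHom (ZMod p)))).toBlocks₁₁) ((κ'.map (⇑(Int.castRingHom (ZMod p)))).toBlocks₁₂) 0 ((κ'.map (⇑(Int.castRingHom (ZMod p)))).toBlocks₂₂) := by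
    conv_lhs => rw [← fromBlocks_toBlocks ((κ'.map (⇑(Int.castRingHom (ZMod p)))))]
    rw [hκ'mC]
  -- blocks of σ and τ
  have hσB : ((-(fromBlocks 0 (-1) 1 0 : Matrix (Fin n ⊕ Fin n) (Fin n ⊕ Fin n) (ZMod p)) * ((η'.map (⇑(Int.castRingHom (ZMod p)))))ᵀ * (fromBlocks 0 (-1) 1 0 : Matrix (Fin n ⊕ Fin n) (Fin n ⊕ Fin n) (ZMod p))) * (η.map (⇑(Int.castRingHom (ZMod p))))) = fromBlocks (((η'.map (⇑(Int.castRingHom (ZMod p)))).toBlocks₂₂)ᵀ * (η.map (⇑(Int.castRingHom (ZMod p)))).toBlocks₁₁)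
      (((η'.map (⇑(Int.castRingHom (ZMod p)))).toBlocks₂₂)ᵀ * (η.map (⇑(Int.castRingHom (ZMod p)))).toBlocks₁₂ + -((η'.map (⇑(Int.castRingHom (ZMod p)))).toBlocks₁₂)ᵀ * (η.map (⇑(Int.castRingHom (ZMod p)))).toBlocks₂₂) 0
      (((η'.map (⇑(Int.castRingHom (ZMod p)))).toBlocks₁₁)ᵀ * (η.map (⇑(Int.castRingHom (ZMod p)))).toBlocks₂₂) := by
    conv_lhs => rw [hη'mB, hηmB]
    rw [u_blocks, fromBlocks_multiply]
    simp
  have hτB : ((κ'.map (⇑(Int.castRingHom (ZMod p)))) * (-(fromBlocks 0 (-1) 1 0 : Matrix (Fin n ⊕ Fin n) (Fin n ⊕ Fin n) (ZMod p)) * ((κ.map (⇑(Int.castRingHom (ZMod p)))))ᵀ * (fromBlocks 0 (-1) 1 0 : Matrix (Fin n ⊕ Fin n) (Fin n ⊕ Fin n) (ZMod p)))) = fromBlocks ((κ'.map (⇑(Int.castRingHom (ZMod p)))).toBlocks₁₁ * ((κ.map (⇑(Int.castRingHom (ZMod p)))).toBlocks₂₂)ᵀ)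
      ((κ'.map (⇑(Int.castRingHom (ZMod p)))).toBlocks₁₁ * -((κ.map (⇑(Int.castRingHom (ZMod p)))).toBlocks₁₂)ᵀ + (κ'.map (⇑(Int.castRingHom (ZMod p)))).toBlocks₁₂ * ((κ.map (⇑(Int.castRingHom (ZMod p)))).toBlocks₁₁)ᵀ) 0
      ((κ'.map (⇑(Int.castRingHom (ZMod p)))).toBlocks₂₂ * ((κ.map (⇑(Int.castRingHom (ZMod p)))).toBlocks₁₁)ᵀ) := by
    conv_lhs => rw [hκ'mB, hκmB]
    rw [u_blocks, fromBlocks_multiply]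
    simp
  have hσC : ((-(fromBlocks 0 (-1) 1 0 : Matrix (Fin n ⊕ Fin n) (Fin n ⊕ Fin n) (ZMod p)) * ((η'.map (⇑(Int.castRingHom (ZMod p)))))ᵀ * (fromBlocks 0 (-1) 1 0 : Matrix (Fin n ⊕ Fin n) (Fin n ⊕ Fin n) (ZMod p))) * (η.map (⇑(Int.castRingHom (ZMod p))))).toBlocks₂₁ = 0 := by rw [hσB, toBlocks_fromBlocks₂₁]
  have hτC : ((κ'.map (⇑(Int.castRingHom (ZMod p)))) * (-(fromBlocks 0 (-1) 1 0 : Matrix (Fin n ⊕ Fin n) (Fin n ⊕ Fin n) (ZMod p)) * ((κ.map (⇑(Int.castRingHom (ZMod p)))))ᵀ * (fromBlocks 0 (-1) 1 0 : Matrix (Fin n ⊕ Fin n) (Fin n ⊕ Fin n) (ZMod p)))).toBlocks₂₁ = 0 := by rw [hτB, toBlocks_fromBlocks₂₁]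
  have hσ22 : ((-(fromBlocks 0 (-1) 1 0 : Matrix (Fin n ⊕ Fin n) (Fin n ⊕ Fin n) (ZMod p)) * ((η'.map (⇑(Int.castRingHom (ZMod p)))))ᵀ * (fromBlocks 0 (-1) 1 0 : Matrix (Fin n ⊕ Fin n) (Fin n ⊕ Fin n) (ZMod p))) * (η.map (⇑(Int.castRingHom (ZMod p))))).toBlocks₂₂ = ((η'.map (⇑(Int.castRingHom (ZMod p)))).toBlocks₁₁)ᵀ * (η.map (⇑(Int.castRingHom (ZMod p)))).toBlocks₂₂ := by
    rw [hσB, toBlocks_fromBlocks₂₂]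
  have hτ22 : ((κ'.map (⇑(Int.castRingHom (ZMod p)))) * (-(fromBlocks 0 (-1) 1 0 : Matrix (Fin n ⊕ Fin n) (Fin n ⊕ Fin n) (ZMod p)) * ((κ.map (⇑(Int.castRingHom (ZMod p)))))ᵀ * (fromBlocks 0 (-1) 1 0 : Matrix (Fin n ⊕ Fin n) (Fin n ⊕ Fin n) (ZMod p)))).toBlocks₂₂ = (κ'.map (⇑(Int.castRingHom (ZMod p)))).toBlocks₂₂ * ((κ.map (⇑(Int.castRingHom (ZMod p)))).toBlocks₁₁)ᵀ := by
    rw [hτB, toBlocks_fromBlocks₂₂]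
  -- A'D = 1 facts
  have hADη : ((η.map (⇑(Int.castRingHom (ZMod p)))).toBlocks₁₁)ᵀ * (η.map (⇑(Int.castRingHom (ZMod p)))).toBlocks₂₂ = 1 := by
    rw [hηmB] at hηs
    exact sympAD' _ n _ _ _ hηs
  have hADη' : ((η'.map (⇑(Int.castRingHom (ZMod p)))).toBlocks₁₁)ᵀ * (η'.map (⇑(Int.castRingHom (ZMod p)))).toBlocks₂₂ = 1 := by
    rw [hη'mB] at hη's
    exact sympAD' _ n _ _ _ hη's
  have hADκ : ((κ.map (⇑(Int.castRingHom (ZMod p)))).toBlocks₁₁)ᵀ * (κ.map (⇑(Int.castRingHom (ZMod p)))).toBlocks₂₂ = 1 := by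
    rw [hκmB] at hκs
    exact sympAD' _ n _ _ _ hκs
  have hADκ' : ((κ'.map (⇑(Int.castRingHom (ZMod p)))).toBlocks₁₁)ᵀ * (κ'.map (⇑(Int.castRingHom (ZMod p)))).toBlocks₂₂ = 1 := by
    rw [hκ'mB] at hκ's
    exact sympAD' _ n _ _ _ hκ's
  -- the key determinant identity
  have hkey := key (ZMod p) n r ((-(fromBlocks 0 (-1) 1 0 : Matrix (Fin n ⊕ Fin n) (Fin n ⊕ Fin n) (ZMod p)) * ((η'.map (⇑(Int.castRingHom (ZMod p)))))ᵀ * (fromBlocks 0 (-1) 1 0 : Matrix (Fin n ⊕ Fin n) (Fin n ⊕ Fin n) (ZMod p))) * (η.map (⇑(Int.castRingHom (ZMod p))))) ((κ'.map (⇑(Int.castRingHom (ZMod p)))) * (-(fromBlocks 0 (-1) 1 0 : Matrix (Fin n ⊕ Fin n) (Fin n ⊕ Fin n) (ZMod p)) * ((κ.map (⇑(Int.castRingHom (ZMod p)))))ᵀ * (fromBlocks 0 (-1) 1 0 : Matrix (Fin n ⊕ Fin n) (Fin n ⊕ Fin n) (ZMod p)))) hτs hσC hτC hστ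
  rw [hσ22, hτ22] at hkey
  -- translate legendre symbols
  have hLS : ∀ g : Matrix (Fin n ⊕ Fin n) (Fin n ⊕ Fin n) ℤ,
      legendreSym p (g.toBlocks₂₂).det
        = quadraticChar (ZMod p) ((g.map (⇑(Int.castRingHom (ZMod p)))).toBlocks₂₂).det := by
    intro g
    have hc : (((g.toBlocks₂₂).det : ℤ) : ZMod p) = ((g.map (⇑(Int.castRingHom (ZMod p)))).toBlocks₂₂).det := by
      calc (((g.toBlocks₂₂).det : ℤ) : ZMod p) = (Int.castRingHom (ZMod p)) (g.toBlocks₂₂).det := rfl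
      _ = ((Int.castRingHom (ZMod p)).mapMatrix g.toBlocks₂₂).det := RingHom.map_det _ _
      _ = ((g.map (⇑(Int.castRingHom (ZMod p)))).toBlocks₂₂).det := by
          rw [RingHom.mapMatrix_apply, ← toBlocks₂₂_map]
    show quadraticChar (ZMod p) (((g.toBlocks₂₂).det : ℤ) : ZMod p) = _
    rw [hc]
  rw [hLS η, hLS κ, hLS η', hLS κ']
  -- scalar determinant relations
  have hdets : (((η'.map (⇑(Int.castRingHom (ZMod p)))).toBlocks₁₁)ᵀ * (η.map (⇑(Int.castRingHom (ZMod p)))).toBlocks₂₂).det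
      = (((η'.map (⇑(Int.castRingHom (ZMod p)))).toBlocks₁₁)ᵀ).det * ((η.map (⇑(Int.castRingHom (ZMod p)))).toBlocks₂₂).det := det_mul _ _
  have hdett : ((κ'.map (⇑(Int.castRingHom (ZMod p)))).toBlocks₂₂ * ((κ.map (⇑(Int.castRingHom (ZMod p)))).toBlocks₁₁)ᵀ).det
      = ((κ'.map (⇑(Int.castRingHom (ZMod p)))).toBlocks₂₂).det * (((κ.map (⇑(Int.castRingHom (ZMod p)))).toBlocks₁₁)ᵀ).det := det_mul _ _
  have hinvη : (((η.map (⇑(Int.castRingHom (ZMod p)))).toBlocks₁₁)ᵀ).det * ((η.map (⇑(Int.castRingHom (ZMod p)))).toBlocks₂₂).det = 1 := by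
    rw [← det_mul, hADη, det_one]
  have hinvη' : (((η'.map (⇑(Int.castRingHom (ZMod p)))).toBlocks₁₁)ᵀ).det * ((η'.map (⇑(Int.castRingHom (ZMod p)))).toBlocks₂₂).det = 1 := by
    rw [← det_mul, hADη', det_one]
  have hinvκ : (((κ.map (⇑(Int.castRingHom (ZMod p)))).toBlocks₁₁)ᵀ).det * ((κ.map (⇑(Int.castRingHom (ZMod p)))).toBlocks₂₂).det = 1 := by
    rw [← det_mul, hADκ, det_one]
  have hinvκ' : (((κ'.map (⇑(Int.castRingHom (ZMod p)))).toBlocks₁₁)ᵀ).det * ((κ'.map (⇑(Int.castRingHom (ZMod p)))).toBlocks₂₂).det = 1 := by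
    rw [← det_mul, hADκ', det_one]
  exact assemble p (((η.map (⇑(Int.castRingHom (ZMod p)))).toBlocks₂₂).det) (((η'.map (⇑(Int.castRingHom (ZMod p)))).toBlocks₂₂).det)
    (((κ.map (⇑(Int.castRingHom (ZMod p)))).toBlocks₂₂).det) (((κ'.map (⇑(Int.castRingHom (ZMod p)))).toBlocks₂₂).det)
    ((((η.map (⇑(Int.castRingHom (ZMod p)))).toBlocks₁₁)ᵀ).det) ((((η'.map (⇑(Int.castRingHom (ZMod p)))).toBlocks₁₁)ᵀ).det)
    ((((κ.map (⇑(Int.castRingHom (ZMod p)))).toBlocks₁₁)ᵀ).det) ((((κ'.map (⇑(Int.castRingHom (ZMod p)))).toBlocks₁₁)ᵀ).det)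
    ((((η'.map (⇑(Int.castRingHom (ZMod p)))).toBlocks₁₁)ᵀ * (η.map (⇑(Int.castRingHom (ZMod p)))).toBlocks₂₂).det)
    (((κ'.map (⇑(Int.castRingHom (ZMod p)))).toBlocks₂₂ * ((κ.map (⇑(Int.castRingHom (ZMod p)))).toBlocks₁₁)ᵀ).det)
    ((Em (ZMod p) n r + Fm (ZMod p) n r * (((η'.map (⇑(Int.castRingHom (ZMod p)))).toBlocks₁₁)ᵀ * (η.map (⇑(Int.castRingHom (ZMod p)))).toBlocks₂₂) *
      Fm (ZMod p) n r).det)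
    hdets hdett hinvη hinvη' hinvκ hinvκ' hkey
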